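/- arXiv:1307.0094 — 3 statements merged into one kernel-verified Lean document; each statement's English description precedes it below -/
import Mathlib

section
/- In dimension d ≥ 2, the generator S = (1/(4(d−1))) Σ_{‖x−z‖=1} Σ_{i,j} (X^{i,j}_{x,z})² applied to a single momentum coordinate satisfies S p_x = 2 Δ p_x, where Δ is the discrete Laplacian on ℤ^d acting componentwise. -/
open scoped BigOperators

/-- Canonical basis vector `e j` of `ℤ^d`. -/
def latE (d : ℕ) (j : Fin d) : Fin d → ℤ := fun i => if i = j then 1 else 0

/-- Directional derivative of a function `F` on configuration space
`(ℝ^d)^{ℤ^d}` along the (finitely supported) direction `v`, at `p`. -/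
noncomputable def dirDeriv {d : ℕ} (F : ((Fin d → ℤ) → Fin d → ℝ) → ℝ)
    (v p : (Fin d → ℤ) → Fin d → ℝ) : ℝ :=
  deriv (fun t : ℝ => F (fun y k => p y k + t * v y k)) 0

/-- The tangent vector corresponding to the vector field
`X^{i,j}_{x,z} = (p_z^j − p_x^j)(∂_{p_z^i} − ∂_{p_x^i}) − (p_z^i − p_x^i)(∂_{p_z^j} − ∂_{p_x^j})`. -/
def Xvec {d : ℕ} (i j : Fin d) (x z : Fin d → ℤ)
    (p : (Fin d → ℤ) → Fin d → ℝ) : (Fin d → ℤ) → Fin d → ℝ :=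
  fun y k =>
    (if y = z ∧ k = i then p z j - p x j else 0)
    - (if y = x ∧ k = i then p z j - p x j else 0)
    - (if y = z ∧ k = j then p z i - p x i else 0)
    + (if y = x ∧ k = j then p z i - p x i else 0)

/-- Action of `X^{i,j}_{x,z}` on a function of the configuration. -/
noncomputable def Xop {d : ℕ} (i j : Fin d) (x z : Fin d → ℤ)
    (F : ((Fin d → ℤ) → Fin d → ℝ) → ℝ) (p : (Fin d → ℤ) → Fin d → ℝ) : ℝ :=
  dirDeriv F (Xvec i j x z p) p

/-- The generator `S = (1/(2(d−1))) Σ_x Σ_{i,j,k} (X^{i,j}_{x,x+e_k})²`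
(equivalently `(1/(4(d−1))) Σ_{‖x−z‖=1} Σ_{i,j} (X^{i,j}_{x,z})²`), for `d ≥ 2`. -/
noncomputable def Sgen {d : ℕ} (F : ((Fin d → ℤ) → Fin d → ℝ) → ℝ)
    (p : (Fin d → ℤ) → Fin d → ℝ) : ℝ :=
  (1 / (2 * ((d : ℝ) - 1))) *
    ∑' x : Fin d → ℤ, ∑ i : Fin d, ∑ j : Fin d, ∑ k : Fin d,
      Xop i j x (x + latE d k) (Xop i j x (x + latE d k) F) p

/-!
Both `X^{i,j}_{x,z}` and the coordinate function `q ↦ q y a` are linear in the momenta, so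
`(X^{i,j}_{x,z})² p_y^a` is the `(y, a)`-coordinate of the vector field applied twice. Summing over
the rotation planes `i, j` gives `4(d-1) (δ_{y,z} - δ_{y,x}) (p_x^a - p_z^a)`, a discrete gradient
across the edge `{x, z}`; summing over the edges `{x, x + e_k}` is then a finite telescoping sum
that leaves the second difference `p_{y+e_k}^a + p_{y-e_k}^a - 2 p_y^a` for each direction `k`.
-/

lemma latE_ne_zero {d : ℕ} (k : Fin d) : latE d k ≠ 0 := fun h => by
  simpa [latE] using congrFun h k

lemma dirDeriv_eq_of_affine {d : ℕ} {F : ((Fin d → ℤ) → Fin d → ℝ) → ℝ}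
    {v p : (Fin d → ℤ) → Fin d → ℝ} {c : ℝ}
    (hF : ∀ t : ℝ, F (fun y k => p y k + t * v y k) = F p + t * c) :
    dirDeriv F v p = c := by
  simp [dirDeriv, hF]

lemma dirDeriv_apply {d : ℕ} (y : Fin d → ℤ) (a : Fin d) (v p : (Fin d → ℤ) → Fin d → ℝ) :
    dirDeriv (fun q => q y a) v p = v y a :=
  dirDeriv_eq_of_affine fun _ => rfl

section Xvec

variable {d : ℕ} (i j : Fin d) (x z : Fin d → ℤ)

lemma Xvec_add_mul (p v : (Fin d → ℤ) → Fin d → ℝ) (t : ℝ) (y : Fin d → ℤ) (a : Fin d) :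
    Xvec i j x z (fun y k => p y k + t * v y k) y a =
      Xvec i j x z p y a + t * Xvec i j x z v y a := by
  simp only [Xvec]
  split_ifs <;> ring

lemma Xop_apply (y : Fin d → ℤ) (a : Fin d) (p : (Fin d → ℤ) → Fin d → ℝ) :
    Xop i j x z (fun q => q y a) p = Xvec i j x z p y a :=
  dirDeriv_apply y a _ p

lemma Xop_Xop_apply (y : Fin d → ℤ) (a : Fin d) (p : (Fin d → ℤ) → Fin d → ℝ) :
    Xop i j x z (Xop i j x z fun q => q y a) p = Xvec i j x z (Xvec i j x z p) y a := by
  rw [Xop, funext (Xop_apply i j x z y a)]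
  exact dirDeriv_eq_of_affine fun t => Xvec_add_mul i j x z p _ t y a

lemma Xvec_apply (p : (Fin d → ℤ) → Fin d → ℝ) (y : Fin d → ℤ) (a : Fin d) :
    Xvec i j x z p y a =
      ((if y = z then 1 else 0) - (if y = x then 1 else 0)) *
        ((if a = i then p z j - p x j else 0) - (if a = j then p z i - p x i else 0)) := by
  simp only [Xvec, ite_and]
  split_ifs <;> ring

lemma Xvec_apply_sub_apply (hzx : z ≠ x) (p : (Fin d → ℤ) → Fin d → ℝ) (b : Fin d) :
    Xvec i j x z p z b - Xvec i j x z p x b =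
      2 * ((if b = i then p z j - p x j else 0) - (if b = j then p z i - p x i else 0)) := by
  simp only [Xvec_apply, hzx, hzx.symm, if_true, if_false]
  ring

end Xvec

lemma sum_Xvec_Xvec_apply {d : ℕ} {x z : Fin d → ℤ} (hzx : z ≠ x) (p : (Fin d → ℤ) → Fin d → ℝ)
    (y : Fin d → ℤ) (a : Fin d) :
    ∑ i : Fin d, ∑ j : Fin d, Xvec i j x z (Xvec i j x z p) y a =
      4 * ((d : ℝ) - 1) * ((if y = z then 1 else 0) - (if y = x then 1 else 0)) *
        (p x a - p z a) := by
  have hterm : ∀ i j, Xvec i j x z (Xvec i j x z p) y a =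
      ((if y = z then 1 else 0) - (if y = x then 1 else 0)) *
        (2 * ((if i = j then (if a = i then 2 * (p z i - p x i) else 0) else 0)
          - (if a = i then p z i - p x i else 0) - (if a = j then p z j - p x j else 0))) := by
    intro i j
    rw [Xvec_apply, Xvec_apply_sub_apply _ _ _ _ hzx, Xvec_apply_sub_apply _ _ _ _ hzx]
    congr 1
    grind
  simp only [hterm, ← Finset.mul_sum, Finset.sum_sub_distrib, Finset.sum_ite_eq,
    Finset.mem_univ, if_true, Finset.sum_const, Finset.card_univ, Fintype.card_fin, nsmul_eq_mul]
  ring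

lemma sum_Xop_Xop_apply {d : ℕ} {x z : Fin d → ℤ} (hzx : z ≠ x) (p : (Fin d → ℤ) → Fin d → ℝ)
    (y : Fin d → ℤ) (a : Fin d) :
    ∑ i : Fin d, ∑ j : Fin d, Xop i j x z (Xop i j x z fun q => q y a) p =
      4 * ((d : ℝ) - 1) * ((if y = z then 1 else 0) - (if y = x then 1 else 0)) *
        (p x a - p z a) := by
  simp only [Xop_Xop_apply, sum_Xvec_Xvec_apply hzx]

lemma hasSum_ite_add_sub_ite {α : Type*} [AddGroup α] [DecidableEq α] (y e : α) (g : α → ℝ) :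
    HasSum (fun x => ((if y = x + e then 1 else 0) - (if y = x then 1 else 0)) * g x)
      (g (y - e) - g y) := by
  have hsplit : (fun x => ((if y = x + e then 1 else 0) - (if y = x then 1 else 0)) * g x) =
      fun x => (if x = y - e then g (y - e) else 0) - (if x = y then g y else 0) := by
    funext x
    have hxe : y = x + e ↔ x = y - e := by rw [eq_comm, eq_sub_iff_add_eq]
    grind
  rw [hsplit]
  exact (hasSum_ite_eq _ _).sub (hasSum_ite_eq _ _)

/-- In `d ≥ 2`, the generator `S` applied to a single momentum coordinate
satisfies `S p_x = 2 Δ p_x`, componentwise. -/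
theorem Sgen_momentum (d : ℕ) (hd : 2 ≤ d) (p : (Fin d → ℤ) → Fin d → ℝ)
    (x₀ : Fin d → ℤ) (m : Fin d) :
    Sgen (fun p => p x₀ m) p =
      2 * ∑ k : Fin d,
        (p (x₀ + latE d k) m + p (x₀ - latE d k) m - 2 * p x₀ m) := by
  have hd1 : (d : ℝ) - 1 ≠ 0 := by
    have : (2 : ℝ) ≤ d := by exact_mod_cast hd
    linarith
  have hsummand : ∀ x : Fin d → ℤ,
      ∑ i : Fin d, ∑ j : Fin d, ∑ k : Fin d,
        Xop i j x (x + latE d k) (Xop i j x (x + latE d k) fun q => q x₀ m) p =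
      ∑ k : Fin d, 4 * ((d : ℝ) - 1) *
        (((if x₀ = x + latE d k then 1 else 0) - (if x₀ = x then 1 else 0)) *
          (p x m - p (x + latE d k) m)) := fun x => by
    rw [(Finset.sum_congr rfl fun i _ => Finset.sum_comm).trans Finset.sum_comm]
    refine Finset.sum_congr rfl fun k _ => ?_
    rw [sum_Xop_Xop_apply (add_ne_left.mpr (latE_ne_zero k)), mul_assoc]
  have hsum := hasSum_sum (s := Finset.univ) fun k _ => (hasSum_ite_add_sub_ite x₀ (latE d k)
    fun x => p x m - p (x + latE d k) m).mul_left (4 * ((d : ℝ) - 1))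
  rw [Sgen, tsum_congr hsummand, hsum.tsum_eq, Finset.mul_sum, Finset.mul_sum]
  refine Finset.sum_congr rfl fun k _ => ?_
  rw [sub_add_cancel]
  field_simp
  ring
end

section
/- In dimension d = 1, the generator S = (1/6) Σ_x (Y_x)² satisfies S p_x = (1/6) Δ(4 p_x + p_{x+1} + p_{x−1}), where Δ is the one-dimensional discrete Laplacian. -/
/-- Directional derivative of a function `F` on the one-dimensional
configuration space `ℝ^ℤ` along the direction `v`, at `p`. -/
noncomputable def dirDeriv1 (F : (ℤ → ℝ) → ℝ) (v p : ℤ → ℝ) : ℝ :=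
  deriv (fun t : ℝ => F (fun y => p y + t * v y)) 0

/-- The tangent vector corresponding to the vector field
`Y_x = (p_x − p_{x+1})∂_{p_{x−1}} + (p_{x+1} − p_{x−1})∂_{p_x} + (p_{x−1} − p_x)∂_{p_{x+1}}`. -/
def Yvec (x : ℤ) (p : ℤ → ℝ) : ℤ → ℝ := fun y =>
  if y = x - 1 then p x - p (x + 1)
  else if y = x then p (x + 1) - p (x - 1)
  else if y = x + 1 then p (x - 1) - p x
  else 0

/-- Action of `Y_x` on a function of the configuration. -/
noncomputable def Yop (x : ℤ) (F : (ℤ → ℝ) → ℝ) (p : ℤ → ℝ) : ℝ :=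
  dirDeriv1 F (Yvec x p) p

/-- The one-dimensional generator `S = (1/6) Σ_x (Y_x)²`. -/
noncomputable def Sgen1 (F : (ℤ → ℝ) → ℝ) (p : ℤ → ℝ) : ℝ :=
  (1 / 6) * ∑' x : ℤ, Yop x (Yop x F) p

/-! Each `Y_x` is a linear vector field supported on the block `v = (p_{x-1}, p_x, p_{x+1})`,
where it acts as `v ↦ v × 𝟙` with `𝟙 = (1, 1, 1)`. Hence `Y_x` maps coordinate functions to linear
functions, `Y_x² v = (v · 𝟙) 𝟙 - 3 v` on that block by the double cross product formula, and only
`Y_{x₀-1}, Y_{x₀}, Y_{x₀+1}` contribute to `S p_{x₀}`. -/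

lemma dirDeriv1_of_linear {F : (ℤ → ℝ) → ℝ} {v p : ℤ → ℝ}
    (hF : ∀ t : ℝ, F (fun y => p y + t * v y) = F p + t * F v) :
    dirDeriv1 F v p = F v := by
  simp [dirDeriv1, hF]

lemma Yvec_add_mul (x : ℤ) (p v : ℤ → ℝ) (t : ℝ) :
    Yvec x (fun y => p y + t * v y) = fun y => Yvec x p y + t * Yvec x v y := by
  funext y
  unfold Yvec
  split_ifs <;> ring

lemma Yop_eval (x y : ℤ) : Yop x (fun q => q y) = fun p => Yvec x p y :=
  funext fun _ => dirDeriv1_of_linear fun _ => rfl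

lemma Yop_Yvec_apply (x y : ℤ) (p : ℤ → ℝ) :
    Yop x (fun q => Yvec x q y) p = Yvec x (Yvec x p) y :=
  dirDeriv1_of_linear fun t => by rw [Yvec_add_mul]

lemma Yvec_eq_zero_of_one_lt_abs {x y : ℤ} (h : 1 < |y - x|) (p : ℤ → ℝ) :
    Yvec x p y = 0 := by
  rw [lt_abs] at h
  unfold Yvec
  split_ifs <;> first | omega | rfl

lemma Yvec_Yvec_of_abs_le_one {x y : ℤ} (h : |y - x| ≤ 1) (p : ℤ → ℝ) :
    Yvec x (Yvec x p) y = p (x - 1) + p x + p (x + 1) - 3 * p y := by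
  obtain rfl | rfl | rfl : y = x - 1 ∨ y = x ∨ y = x + 1 := by
    rw [abs_le] at h; omega
  all_goals unfold Yvec; split_ifs <;> first | omega | ring

lemma Sgen1_eval (p : ℤ → ℝ) (y : ℤ) :
    Sgen1 (fun q => q y) p = (1 / 6) *
      (Yvec (y - 1) (Yvec (y - 1) p) y + Yvec y (Yvec y p) y +
        Yvec (y + 1) (Yvec (y + 1) p) y) := by
  have hsupp : ∀ x ∉ ({y - 1, y, y + 1} : Finset ℤ), Yvec x (Yvec x p) y = 0 := fun x hx => by
    refine Yvec_eq_zero_of_one_lt_abs ?_ _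
    simp only [Finset.mem_insert, Finset.mem_singleton] at hx
    rw [lt_abs]; omega
  rw [Sgen1]
  simp only [Yop_eval, Yop_Yvec_apply]
  rw [tsum_eq_sum hsupp, Finset.sum_insert (by simp; omega), Finset.sum_pair (by omega), add_assoc]

/-- In `d = 1`, the generator `S = (1/6) Σ_x (Y_x)²` satisfies
`S p_x = (1/6) Δ(4 p_x + p_{x+1} + p_{x−1})`. -/
theorem Sgen1_momentum (p : ℤ → ℝ) (x₀ : ℤ) :
    Sgen1 (fun p => p x₀) p =
      (1 / 6) * ((4 * p (x₀ + 1) + p (x₀ + 2) + p x₀)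
        + (4 * p (x₀ - 1) + p x₀ + p (x₀ - 2))
        - 2 * (4 * p x₀ + p (x₀ + 1) + p (x₀ - 1))) := by
  rw [Sgen1_eval, Yvec_Yvec_of_abs_le_one (by norm_num), Yvec_Yvec_of_abs_le_one (by norm_num),
    Yvec_Yvec_of_abs_le_one (by norm_num), show x₀ - 1 - 1 = x₀ - 2 by ring,
    show x₀ + 1 + 1 = x₀ + 2 by ring, sub_add_cancel, add_sub_cancel_right]
  ring
end

section
/- In dimension d ≥ 2, the generator S satisfies S(p_x²/2) = Δ(p_x²), i.e. the noise part of the dynamics satisfies a discrete diffusion equation for the kinetic energy: S e_x^{kin} = Δ p_x² where e_x^{kin} = p_x²/2. -/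
/-!
The field `X^{i,j}_{x,z}` is linear in `p` and `e^{kin}_{x₀} = p_{x₀}²/2` is quadratic, so
`(X^{i,j}_{x,z})² e^{kin}_{x₀}` is an explicit quadratic form. It vanishes unless `x₀` is an end
of the bond `{x, z}`, and if `x₀ = x`, `i ≠ j` it equals
`(p_z^i)² + (p_z^j)² − (p_x^i)² − (p_x^j)²`. Summing over the `d(d−1)` ordered pairs `i ≠ j`
counts every coordinate `2(d−1)` times, which cancels the normalisation of `S`, and summing
over bonds leaves the discrete Laplacian.
-/

open scoped BigOperators

noncomputable def kineticEnergy {d : ℕ} (y : Fin d → ℤ) (q : (Fin d → ℤ) → Fin d → ℝ) : ℝ :=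
  (∑ k : Fin d, q y k ^ 2) / 2

lemma sum_sum_off_diag_add {ι : Type*} [Fintype ι] [DecidableEq ι] (g : ι → ℝ) :
    ∑ i, ∑ j, (if i = j then 0 else g i + g j) = 2 * ((Fintype.card ι : ℝ) - 1) * ∑ i, g i := by
  have h : ∀ i j, (if i = j then 0 else g i + g j) = g i + g j - if i = j then 2 * g i else 0 := by
    intro i j
    split_ifs with hij
    · subst hij; ring
    · ring
  simp only [h, Finset.sum_sub_distrib, Finset.sum_add_distrib, Finset.sum_ite_eq,
    Finset.mem_univ, if_true, Finset.sum_const, Finset.card_univ, nsmul_eq_mul, ← Finset.mul_sum]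
  ring

lemma hasDerivAt_affine_mul_affine (a b c e : ℝ) :
    HasDerivAt (fun t : ℝ => (a + t * b) * (c + t * e)) (b * c + a * e) 0 := by
  have hab : HasDerivAt (fun t : ℝ => a + t * b) b 0 := by
    simpa using ((hasDerivAt_id (0 : ℝ)).mul_const b).const_add a
  have hce : HasDerivAt (fun t : ℝ => c + t * e) e 0 := by
    simpa using ((hasDerivAt_id (0 : ℝ)).mul_const e).const_add c
  simpa using hab.fun_mul hce

lemma hasSum_sum_ite_add_ite_eq {G α ι : Type*} [AddGroup G] [DecidableEq G] [AddCommMonoid α]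
    [TopologicalSpace α] [ContinuousAdd α] [Fintype ι] (e : ι → G) (g : G → α) (x₀ : G) :
    HasSum (fun x => ∑ k, ((if x = x₀ then g (x + e k) else 0) + (if x + e k = x₀ then g x else 0)))
      (∑ k, (g (x₀ + e k) + g (x₀ - e k))) := by
  refine hasSum_sum fun k _ => HasSum.add ?_ ?_
  · simpa using hasSum_single (f := fun x => if x = x₀ then g (x + e k) else 0) x₀
      fun x hx => if_neg hx
  · simpa using hasSum_single (f := fun x => if x + e k = x₀ then g x else 0) (x₀ - e k)
      fun x hx => if_neg fun h => hx (eq_sub_of_add_eq h)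

section Generator

variable {d : ℕ} {i j : Fin d} {x z x₀ : Fin d → ℤ} {p : (Fin d → ℤ) → Fin d → ℝ}

lemma Xvec_add_smul (v : (Fin d → ℤ) → Fin d → ℝ) (t : ℝ) :
    Xvec i j x z (fun y m => p y m + t * v y m)
      = fun y m => Xvec i j x z p y m + t * Xvec i j x z v y m := by
  funext y m
  simp only [Xvec]
  split_ifs <;> ring

lemma Xvec_swap : Xvec i j z x = Xvec i j x z := by
  funext p y m
  simp only [Xvec]
  split_ifs <;> ring

lemma Xop_swap : Xop i j z x = Xop i j x z := by
  funext F p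
  simp only [Xop, Xvec_swap]

lemma Xop_self (F : ((Fin d → ℤ) → Fin d → ℝ) → ℝ) : Xop i i x z F p = 0 := by
  have hXvec : Xvec i i x z p = 0 := by
    funext y m
    simp only [Xvec]
    split_ifs <;> simp
  simp [Xop, dirDeriv, hXvec]

lemma Xvec_apply_of_ne {y : Fin d → ℤ} (hx : y ≠ x) (hz : y ≠ z) (m : Fin d) :
    Xvec i j x z p y m = 0 := by
  simp [Xvec, hx, hz]

lemma dirDeriv_kineticEnergy (v : (Fin d → ℤ) → Fin d → ℝ) :
    dirDeriv (kineticEnergy x₀) v p = ∑ k : Fin d, p x₀ k * v x₀ k := by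
  have h := (HasDerivAt.fun_sum fun k (_ : k ∈ Finset.univ) =>
    hasDerivAt_affine_mul_affine (p x₀ k) (v x₀ k) (p x₀ k) (v x₀ k)).div_const 2
  convert h.deriv using 1
  · simp only [dirDeriv, kineticEnergy, sq]
  · rw [Finset.sum_div]
    exact Finset.sum_congr rfl fun k _ => by ring

lemma Xop_kineticEnergy :
    Xop i j x z (kineticEnergy x₀) = fun q => ∑ k : Fin d, q x₀ k * Xvec i j x z q x₀ k :=
  funext fun _ => dirDeriv_kineticEnergy _

lemma Xop_Xop_kineticEnergy :
    Xop i j x z (Xop i j x z (kineticEnergy x₀)) p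
      = ∑ k : Fin d, (Xvec i j x z p x₀ k ^ 2 + p x₀ k * Xvec i j x z (Xvec i j x z p) x₀ k) := by
  have h := HasDerivAt.fun_sum fun k (_ : k ∈ Finset.univ) =>
    hasDerivAt_affine_mul_affine (p x₀ k) (Xvec i j x z p x₀ k) (Xvec i j x z p x₀ k)
      (Xvec i j x z (Xvec i j x z p) x₀ k)
  rw [Xop, Xop_kineticEnergy, dirDeriv]
  simp only [Xvec_add_smul]
  rw [h.deriv]
  exact Finset.sum_congr rfl fun k _ => by ring

lemma Xop_Xop_kineticEnergy_of_ne (hx : x₀ ≠ x) (hz : x₀ ≠ z) :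
    Xop i j x z (Xop i j x z (kineticEnergy x₀)) p = 0 := by
  simp [Xop_Xop_kineticEnergy, Xvec_apply_of_ne hx hz]

lemma Xop_Xop_kineticEnergy_left (hij : i ≠ j) (hz : z ≠ x₀) :
    Xop i j x₀ z (Xop i j x₀ z (kineticEnergy x₀)) p
      = (p z i ^ 2 - p x₀ i ^ 2) + (p z j ^ 2 - p x₀ j ^ 2) := by
  have hk : ∀ k : Fin d,
      Xvec i j x₀ z p x₀ k ^ 2 + p x₀ k * Xvec i j x₀ z (Xvec i j x₀ z p) x₀ k
        = (if k = i then 2 * (p z i - p x₀ i) * p x₀ i + (p z j - p x₀ j) ^ 2 else 0)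
          + (if k = j then 2 * (p z j - p x₀ j) * p x₀ j + (p z i - p x₀ i) ^ 2 else 0) := by
    intro k
    by_cases hki : k = i
    · subst hki
      simp [Xvec, hz, Ne.symm hz, hij, Ne.symm hij]
      ring
    by_cases hkj : k = j
    · subst hkj
      simp [Xvec, hz, Ne.symm hz, hij, Ne.symm hij]
      ring
    · simp [Xvec, hki, hkj]
  simp only [Xop_Xop_kineticEnergy, hk, Finset.sum_add_distrib, Finset.sum_ite_eq',
    Finset.mem_univ, if_true]
  ring

lemma sum_Xop_Xop_kineticEnergy_left (hz : z ≠ x₀) :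
    ∑ i : Fin d, ∑ j : Fin d, Xop i j x₀ z (Xop i j x₀ z (kineticEnergy x₀)) p
      = 2 * ((d : ℝ) - 1) * ∑ m : Fin d, (p z m ^ 2 - p x₀ m ^ 2) := by
  have hij : ∀ i j : Fin d, Xop i j x₀ z (Xop i j x₀ z (kineticEnergy x₀)) p
      = if i = j then 0 else (p z i ^ 2 - p x₀ i ^ 2) + (p z j ^ 2 - p x₀ j ^ 2) := by
    intro i j
    split_ifs with hij
    · subst hij; exact Xop_self _
    · exact Xop_Xop_kineticEnergy_left hij hz
  simp only [hij, sum_sum_off_diag_add, Fintype.card_fin]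

lemma sum_Xop_Xop_kineticEnergy (hxz : x ≠ z) :
    ∑ i : Fin d, ∑ j : Fin d, Xop i j x z (Xop i j x z (kineticEnergy x₀)) p
      = 2 * ((d : ℝ) - 1) *
          ((if x = x₀ then ∑ m : Fin d, (p z m ^ 2 - p x₀ m ^ 2) else 0)
            + (if z = x₀ then ∑ m : Fin d, (p x m ^ 2 - p x₀ m ^ 2) else 0)) := by
  by_cases hx : x = x₀
  · subst hx
    simp [sum_Xop_Xop_kineticEnergy_left (Ne.symm hxz), Ne.symm hxz]
  by_cases hz : z = x₀
  · subst hz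
    simp only [Xop_swap (x := z) (z := x), sum_Xop_Xop_kineticEnergy_left hx]
    simp [hx]
  · simp [Xop_Xop_kineticEnergy_of_ne (Ne.symm hx) (Ne.symm hz), hx, hz]

end Generator

/-- In `d ≥ 2`, the noise generator `S` satisfies `S(p_x²/2) = Δ(p_x²)`:
a discrete diffusion equation for the kinetic energy `e_x^{kin} = p_x²/2`. -/
theorem Sgen_kinetic_energy (d : ℕ) (hd : 2 ≤ d) (p : (Fin d → ℤ) → Fin d → ℝ)
    (x₀ : Fin d → ℤ) :
    Sgen (fun p => (∑ k : Fin d, p x₀ k ^ 2) / 2) p =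
      ∑ k : Fin d,
        ((∑ m : Fin d, p (x₀ + latE d k) m ^ 2)
          + (∑ m : Fin d, p (x₀ - latE d k) m ^ 2)
          - 2 * ∑ m : Fin d, p x₀ m ^ 2) := by
  have hd1 : (d : ℝ) - 1 ≠ 0 := by
    have : (2 : ℝ) ≤ d := by exact_mod_cast hd
    linarith
  let g : (Fin d → ℤ) → ℝ := fun y => ∑ m : Fin d, (p y m ^ 2 - p x₀ m ^ 2)
  have hsite : ∀ x, ∑ i : Fin d, ∑ j : Fin d, ∑ k : Fin d,
      Xop i j x (x + latE d k) (Xop i j x (x + latE d k) (kineticEnergy x₀)) p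
        = 2 * ((d : ℝ) - 1) * ∑ k : Fin d, ((if x = x₀ then g (x + latE d k) else 0)
            + (if x + latE d k = x₀ then g x else 0)) := by
    intro x
    rw [Finset.sum_comm_cycle, Finset.mul_sum]
    exact Finset.sum_congr rfl fun k _ =>
      sum_Xop_Xop_kineticEnergy fun h => latE_ne_zero k (left_eq_add.mp h)
  change Sgen (kineticEnergy x₀) p = _
  rw [Sgen, tsum_congr hsite, tsum_mul_left, (hasSum_sum_ite_add_ite_eq (latE d) g x₀).tsum_eq]
  field_simp
  refine Finset.sum_congr rfl fun k _ => ?_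
  simp only [g, Finset.sum_sub_distrib]
  ring
end
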